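/- Let S = ⟨a_0,…,a_g⟩ be a numerical semigroup that is free for the arrangement (a_0,…,a_g), and let φ : ℂ[x_0,…,x_g] → ℂ[t] be the ℂ-algebra homomorphism with φ(x_j) = t^{a_j}. Then there exist natural numbers λ_{i,j} (for 1 ≤ i ≤ g and 0 ≤ j ≤ i−1) with n_i·a_i = Σ_{j=0}^{i-1} λ_{i,j}·a_j, such that the kernel of φ is generated as an ideal by the g binomials x_i^{n_i} − ∏_{j=0}^{i-1} x_j^{λ_{i,j}}, i = 1,…,g. In particular the toric ideal I_S = ker(φ) is a complete intersection generated by g binomials. -/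

import Mathlib

/-- `eSeq a i = gcd(a 0, …, a i)`. -/
def eSeq (a : ℕ → ℕ) : ℕ → ℕ
  | 0 => a 0
  | i + 1 => Nat.gcd (eSeq a i) (a (i + 1))

/-- `nSeq a i = e_{i-1} / e_i` (intended for `1 ≤ i`). -/
def nSeq (a : ℕ → ℕ) (i : ℕ) : ℕ := eSeq a (i - 1) / eSeq a i

/-- `gen a i = ⟨a 0, …, a i⟩`, the set of all ℕ-linear combinations. -/
def gen (a : ℕ → ℕ) (i : ℕ) : Set ℕ :=
  {s | ∃ c : ℕ → ℕ, s = ∑ j ∈ Finset.range (i + 1), c j * a j}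

/-- The semigroup `S = ⟨a 0, …, a g⟩` is free for the arrangement `(a 0, …, a g)`. -/
def IsFreeArr (a : ℕ → ℕ) (g : ℕ) : Prop :=
  eSeq a g = 1 ∧ ∀ i, 1 ≤ i → i ≤ g → nSeq a i * a i ∈ gen a (i - 1)

/-- The ℂ-algebra map `ℂ[x_0, …, x_g] → ℂ[t]`, `x_j ↦ t^{a_j}`. -/
noncomputable def phiMap (g : ℕ) (a : ℕ → ℕ) :
    MvPolynomial (Fin (g + 1)) ℂ →ₐ[ℂ] Polynomial ℂ :=
  MvPolynomial.aeval fun j : Fin (g + 1) => (Polynomial.X : Polynomial ℂ) ^ (a j.val)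

/-!
Let `J` be the ideal of the binomials `x_i ^ n_i - ∏_{j<i} x_j ^ λ_{ij}`; it lies in `ker φ`
since both terms map to `t ^ (n_i a_i)`. Rewriting `x_i ^ n_i` to `∏_{j<i} x_j ^ λ_{ij}` reduces
every monomial modulo `J` to a normal monomial `x^c` with `c_i < n_i` for `i ≥ 1`. Distinct normal
monomials have distinct images `t ^ (∑ c_i a_i)`: reading `∑ c_i a_i` modulo `e_{k-1}` recovers
`c_k a_k`, hence `c_k` modulo `e_{k-1} / gcd(e_{k-1}, a_k) = n_k`, from the top index down.
So `φ` is injective on the span of the normal monomials, a complement of `J`, and `ker φ = J`.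
-/

open Finset

section Arithmetic

variable {a : ℕ → ℕ}

lemma eSeq_pos (h0 : 0 < a 0) : ∀ i, 0 < eSeq a i
  | 0 => h0
  | i + 1 => Nat.gcd_pos_of_pos_left _ (eSeq_pos h0 i)

lemma eSeq_dvd_eSeq {i j : ℕ} (hji : j ≤ i) : eSeq a i ∣ eSeq a j := by
  induction i, hji using Nat.le_induction with
  | base => rfl
  | succ i _ ih => exact (Nat.gcd_dvd_left _ _).trans ih

lemma eSeq_dvd {i j : ℕ} (hji : j ≤ i) : eSeq a i ∣ a j := by
  refine (eSeq_dvd_eSeq hji).trans ?_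
  cases j with
  | zero => rfl
  | succ j => exact Nat.gcd_dvd_right _ _

lemma nSeq_pos (h0 : 0 < a 0) (i : ℕ) : 0 < nSeq a i :=
  Nat.div_pos (Nat.le_of_dvd (eSeq_pos h0 _) (eSeq_dvd_eSeq (Nat.sub_le i 1))) (eSeq_pos h0 i)

lemma Nat.ModEq.of_mul_eSeq (h0 : 0 < a 0) {k c d : ℕ}
    (h : c * a (k + 1) ≡ d * a (k + 1) [MOD eSeq a k]) : c ≡ d [MOD nSeq a (k + 1)] :=
  h.cancel_right_div_gcd (eSeq_pos h0 k)

lemma eq_of_sum_mul_eq_sum_mul (h0 : 0 < a 0) {k : ℕ} {c d : ℕ → ℕ}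
    (hc : ∀ i ∈ Icc 1 k, c i < nSeq a i) (hd : ∀ i ∈ Icc 1 k, d i < nSeq a i)
    (h : ∑ j ∈ range (k + 1), c j * a j = ∑ j ∈ range (k + 1), d j * a j) :
    ∀ i ≤ k, c i = d i := by
  induction k with
  | zero =>
    intro i hi
    obtain rfl : i = 0 := by omega
    simpa [Nat.mul_left_inj h0.ne'] using h
  | succ k ih =>
    rw [sum_range_succ _ (k + 1), sum_range_succ _ (k + 1)] at h
    have hlow : ∀ e : ℕ → ℕ, ∑ j ∈ range (k + 1), e j * a j ≡ 0 [MOD eSeq a k] := fun e =>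
      (Nat.modEq_zero_iff_dvd).2 <| dvd_sum fun j hj =>
        (eSeq_dvd (Nat.lt_succ_iff.mp (mem_range.mp hj))).mul_left _
    have htop : c (k + 1) = d (k + 1) := by
      have hmod : c (k + 1) * a (k + 1) ≡ d (k + 1) * a (k + 1) [MOD eSeq a k] :=
        calc c (k + 1) * a (k + 1) = 0 + c (k + 1) * a (k + 1) := (zero_add _).symm
          _ ≡ ∑ j ∈ range (k + 1), c j * a j + c (k + 1) * a (k + 1) [MOD eSeq a k] :=
            ((hlow c).add_right _).symm
          _ = ∑ j ∈ range (k + 1), d j * a j + d (k + 1) * a (k + 1) := h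
          _ ≡ 0 + d (k + 1) * a (k + 1) [MOD eSeq a k] := (hlow d).add_right _
          _ = d (k + 1) * a (k + 1) := zero_add _
      exact (Nat.ModEq.of_mul_eSeq h0 hmod).eq_of_lt_of_lt
        (hc _ (by simp)) (hd _ (by simp))
    rw [htop, Nat.add_right_cancel_iff] at h
    intro i hi
    rcases Nat.lt_or_eq_of_le hi with hi | rfl
    · exact ih (fun j hj => hc j (by simp at hj ⊢; omega))
        (fun j hj => hd j (by simp at hj ⊢; omega)) h i (by omega)
    · exact htop

end Arithmetic

theorem LinearMap.ker_eq_of_sup_span_eq_top {R M N ι : Type*} [Ring R] [AddCommGroup M]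
    [Module R M] [AddCommGroup N] [Module R N] {f : M →ₗ[R] N} {P : Submodule R M}
    {v : ι → M} (hP : P ≤ LinearMap.ker f) (hv : P ⊔ Submodule.span R (Set.range v) = ⊤)
    (hli : LinearIndependent R (f ∘ v)) : LinearMap.ker f = P := by
  refine le_antisymm (fun x hx => ?_) hP
  obtain ⟨u, hu, q, hq, rfl⟩ := Submodule.mem_sup.mp (hv ▸ Submodule.mem_top : x ∈ P ⊔ _)
  rw [← Finsupp.range_linearCombination] at hq
  obtain ⟨l, rfl⟩ := hq
  have hfl : Finsupp.linearCombination R (f ∘ v) l = Finsupp.linearCombination R (f ∘ v) 0 := by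
    rw [← Finsupp.apply_linearCombination, map_zero]
    simpa [LinearMap.mem_ker.mp (hP hu)] using hx
  rw [hli hfl, map_zero, add_zero]
  exact hu

namespace MvPolynomial

variable {R σ : Type*} [CommRing R]

theorem monomial_sub_monomial_mem_of_le {I : Ideal (MvPolynomial σ R)} {u v c : σ →₀ ℕ}
    (huv : monomial u (1 : R) - monomial v 1 ∈ I) (huc : u ≤ c) :
    monomial c (1 : R) - monomial (c - u + v) 1 ∈ I := by
  have : monomial c (1 : R) - monomial (c - u + v) 1 =
      monomial (c - u) 1 * (monomial u 1 - monomial v 1) := by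
    rw [mul_sub, monomial_mul, monomial_mul, one_mul, tsub_add_cancel_of_le huc]
  exact this ▸ I.mul_mem_left _ huv

theorem restrictScalars_sup_span_monomial_eq_top (I : Ideal (MvPolynomial σ R))
    {r : (σ →₀ ℕ) → (σ →₀ ℕ) → Prop} (hr : WellFounded r) (N : Set (σ →₀ ℕ))
    (hred : ∀ c ∉ N, ∃ c', r c' c ∧ monomial c (1 : R) - monomial c' 1 ∈ I) :
    I.restrictScalars R ⊔ Submodule.span R ((fun c => monomial c (1 : R)) '' N) = ⊤ := by
  set T := I.restrictScalars R ⊔ Submodule.span R ((fun c => monomial c (1 : R)) '' N)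
  have hmon : ∀ c, monomial c (1 : R) ∈ T := fun c => by
    induction c using hr.induction with
    | _ c ih =>
      by_cases hc : c ∈ N
      · exact Submodule.mem_sup_right (Submodule.subset_span ⟨c, hc, rfl⟩)
      · obtain ⟨c', hc'c, hmem⟩ := hred c hc
        rw [← sub_add_cancel (monomial c (1 : R)) (monomial c' 1)]
        exact T.add_mem (Submodule.mem_sup_left hmem) (ih c' hc'c)
  rw [eq_top_iff, ← (basisMonomials σ R).span_eq, coe_basisMonomials, Submodule.span_le]
  rintro _ ⟨c, rfl⟩
  exact hmon c

end MvPolynomial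

open MvPolynomial

section FreeSemigroup

variable {g : ℕ} {a : ℕ → ℕ}

lemma Fin.sum_filter_val_lt {M : Type*} [AddCommMonoid M] {n : ℕ} (i : Fin n) (f : ℕ → M) :
    ∑ j ∈ univ.filter (fun j : Fin n => j.val < i.val), f j = ∑ j ∈ range i, f j := by
  rw [← sum_image (fun _ _ _ _ => Fin.ext)]
  congr 1
  ext m
  simp only [mem_image, mem_filter, mem_univ, true_and, mem_range]
  exact ⟨by rintro ⟨j, hj, rfl⟩; exact hj, fun hm => ⟨⟨m, hm.trans i.isLt⟩, hm, rfl⟩⟩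

lemma exists_nSeq_mul_eq_sum (h : ∀ i, 1 ≤ i → i ≤ g → nSeq a i * a i ∈ gen a (i - 1)) :
    ∃ lam : Fin (g + 1) → Fin (g + 1) → ℕ, ∀ i : Fin (g + 1), i ≠ 0 →
      nSeq a i * a i = ∑ j ∈ univ.filter (fun j : Fin (g + 1) => j.val < i.val), lam i j * a j := by
  have hrep (i : Fin (g + 1)) :
      ∃ c : ℕ → ℕ, i ≠ 0 → nSeq a i * a i = ∑ j ∈ range i, c j * a j := by
    by_cases hi : i = 0
    · exact ⟨0, fun h => absurd hi h⟩
    have hi' : 1 ≤ i.val := Nat.one_le_iff_ne_zero.mpr (Fin.val_ne_zero_iff.mpr hi)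
    obtain ⟨c, hc⟩ := h i hi' (Nat.lt_succ_iff.mp i.isLt)
    exact ⟨c, fun _ => by rwa [Nat.sub_add_cancel hi'] at hc⟩
  choose c hc using hrep
  exact ⟨fun i j => c i j, fun i hi => (hc i hi).trans (Fin.sum_filter_val_lt i _).symm⟩

def IsNormalExponent (a : ℕ → ℕ) (c : Fin (g + 1) →₀ ℕ) : Prop :=
  ∀ i, i ≠ 0 → c i < nSeq a i

noncomputable def aDegree (a : ℕ → ℕ) : (Fin (g + 1) →₀ ℕ) →+ ℕ :=
  Finsupp.weight fun i : Fin (g + 1) => a i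

lemma aDegree_single (i : Fin (g + 1)) (n : ℕ) : aDegree a (Finsupp.single i n) = n * a i :=
  Finsupp.weight_single _ _ _

lemma aDegree_eq_sum (c : Fin (g + 1) →₀ ℕ) : aDegree a c = ∑ i, c i * a i := by
  rw [aDegree, Finsupp.weight_apply, Finsupp.sum_fintype _ _ (by simp)]
  rfl

open Fin.NatCast in
lemma eq_of_aDegree_eq (h0 : 0 < a 0) {c d : Fin (g + 1) →₀ ℕ} (hc : IsNormalExponent a c)
    (hd : IsNormalExponent a d) (h : aDegree a c = aDegree a d) : c = d := by
  have hsum (e : Fin (g + 1) →₀ ℕ) :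
      aDegree a e = ∑ m ∈ range (g + 1), e (m : Fin (g + 1)) * a m := by
    rw [aDegree_eq_sum, ← Fin.sum_univ_eq_sum_range (fun m => e (m : Fin (g + 1)) * a m)]
    simp only [Fin.cast_val_eq_self]
  have hbound {e : Fin (g + 1) →₀ ℕ} (he : IsNormalExponent a e) :
      ∀ m ∈ Icc 1 g, e (m : Fin (g + 1)) < nSeq a m := fun m hm => by
    obtain ⟨hm1, hmg⟩ := mem_Icc.mp hm
    have hval : ((m : Fin (g + 1)) : ℕ) = m := Fin.val_cast_of_lt (Nat.lt_succ_of_le hmg)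
    simpa [hval] using he m (fun h => by rw [← Fin.val_eq_zero_iff, hval] at h; omega)
  ext i
  simpa using eq_of_sum_mul_eq_sum_mul h0 (hbound hc) (hbound hd)
    (by rw [← hsum, ← hsum, h]) i (Nat.lt_succ_iff.mp i.isLt)

lemma phiMap_monomial (c : Fin (g + 1) →₀ ℕ) :
    phiMap g a (monomial c 1) = Polynomial.X ^ aDegree a c := by
  rw [phiMap, aeval_monomial, map_one, one_mul, aDegree, Finsupp.weight_apply, Finsupp.prod,
    Finsupp.sum, ← prod_pow_eq_pow_sum]
  exact prod_congr rfl fun i _ => by rw [← pow_mul, smul_eq_mul, mul_comm]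

lemma linearIndependent_phiMap_monomial (h0 : 0 < a 0) :
    LinearIndependent ℂ fun c : {c : Fin (g + 1) →₀ ℕ // IsNormalExponent a c} =>
      phiMap g a (monomial c.1 1) := by
  have hinj : Function.Injective
      fun c : {c : Fin (g + 1) →₀ ℕ // IsNormalExponent a c} => aDegree a c.1 :=
    fun c d h => Subtype.ext (eq_of_aDegree_eq h0 c.2 d.2 h)
  convert (Polynomial.basisMonomials ℂ).linearIndependent.comp _ hinj using 1
  ext1 c
  simp [phiMap_monomial, Polynomial.coe_basisMonomials, Polynomial.X_pow_eq_monomial]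

noncomputable def lowerExponent (lam : Fin (g + 1) → Fin (g + 1) → ℕ) (i : Fin (g + 1)) :
    Fin (g + 1) →₀ ℕ :=
  ∑ j ∈ univ.filter (fun j : Fin (g + 1) => j.val < i.val), Finsupp.single j (lam i j)

variable {lam : Fin (g + 1) → Fin (g + 1) → ℕ}

lemma monomial_lowerExponent {R : Type*} [CommSemiring R] (i : Fin (g + 1)) :
    monomial (lowerExponent lam i) (1 : R) =
      ∏ j ∈ univ.filter (fun j : Fin (g + 1) => j.val < i.val), X j ^ lam i j := by
  simp only [lowerExponent, monomial_sum_one, X_pow_eq_monomial]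

lemma lowerExponent_apply_of_le {i j : Fin (g + 1)} (hij : i ≤ j) :
    lowerExponent lam i j = 0 := by
  rw [lowerExponent, Finsupp.finsetSum_apply]
  refine sum_eq_zero fun k hk => Finsupp.single_eq_of_ne ?_
  rintro rfl
  exact absurd hij (not_le.mpr (mem_filter.mp hk).2)

lemma aDegree_lowerExponent (i : Fin (g + 1)) :
    aDegree a (lowerExponent lam i) =
      ∑ j ∈ univ.filter (fun j : Fin (g + 1) => j.val < i.val), lam i j * a j := by
  simp [lowerExponent, aDegree, Finsupp.weight_single]

/-- `Pi.Lex (· > ·)` compares exponent vectors from the top index down: rewriting `x_i ^ n_i`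
lowers `c i` and touches only exponents below `i`. -/
lemma exists_reduction {R : Type*} [CommRing R] (h0 : 0 < a 0)
    {J : Ideal (MvPolynomial (Fin (g + 1)) R)}
    (hJ : ∀ i : Fin (g + 1), i ≠ 0 →
      monomial (Finsupp.single i (nSeq a i)) (1 : R) - monomial (lowerExponent lam i) 1 ∈ J)
    (c : Fin (g + 1) →₀ ℕ) (hc : ¬ IsNormalExponent a c) :
    ∃ c' : Fin (g + 1) →₀ ℕ, Pi.Lex (· > ·) (· < ·) ⇑c' ⇑c ∧
      monomial c (1 : R) - monomial c' 1 ∈ J := by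
  obtain ⟨i, hi, hci⟩ : ∃ i : Fin (g + 1), i ≠ 0 ∧ nSeq a i ≤ c i := by
    simpa [IsNormalExponent] using hc
  refine ⟨c - Finsupp.single i (nSeq a i) + lowerExponent lam i, ⟨i, fun j hj => ?_, ?_⟩,
    monomial_sub_monomial_mem_of_le (hJ i hi) (Finsupp.single_le_iff.mpr hci)⟩
  · have hij : i < j := hj
    simp [lowerExponent_apply_of_le hij.le, hij.ne]
  · have := nSeq_pos h0 i
    simp only [Finsupp.add_apply, Finsupp.tsub_apply, Finsupp.single_eq_same,
      lowerExponent_apply_of_le le_rfl]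
    omega

end FreeSemigroup

theorem stmt_14 (g : ℕ) (a : ℕ → ℕ) (hpos : ∀ i, i ≤ g → 0 < a i)
    (hfree : IsFreeArr a g) :
    ∃ lam : Fin (g + 1) → Fin (g + 1) → ℕ,
      (∀ i : Fin (g + 1), i ≠ 0 →
        nSeq a i.val * a i.val =
          ∑ j ∈ Finset.univ.filter (fun j : Fin (g + 1) => j.val < i.val),
            lam i j * a j.val) ∧
      RingHom.ker (phiMap g a) =
        Ideal.span
          (((Finset.univ.filter (fun i : Fin (g + 1) => i ≠ 0)).image
            (fun i : Fin (g + 1) =>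
              (MvPolynomial.X i : MvPolynomial (Fin (g + 1)) ℂ) ^ (nSeq a i.val) -
                ∏ j ∈ Finset.univ.filter (fun j : Fin (g + 1) => j.val < i.val),
                  (MvPolynomial.X j : MvPolynomial (Fin (g + 1)) ℂ) ^ (lam i j)) :
            Finset (MvPolynomial (Fin (g + 1)) ℂ)) : Set (MvPolynomial (Fin (g + 1)) ℂ)) := by
  have h0 : 0 < a 0 := hpos 0 (Nat.zero_le g)
  obtain ⟨lam, hlam⟩ := exists_nSeq_mul_eq_sum hfree.2
  refine ⟨lam, hlam, ?_⟩
  set J : Ideal (MvPolynomial (Fin (g + 1)) ℂ) := Ideal.span _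
  have hbinomial (i : Fin (g + 1)) (hi : i ≠ 0) :
      monomial (Finsupp.single i (nSeq a i)) (1 : ℂ) - monomial (lowerExponent lam i) 1 ∈ J := by
    rw [← X_pow_eq_monomial, monomial_lowerExponent]
    exact Ideal.subset_span (mem_image_of_mem _ (mem_filter.mpr ⟨mem_univ i, hi⟩))
  have hJ : J ≤ RingHom.ker (phiMap g a) := by
    refine Ideal.span_le.mpr fun p hp => ?_
    obtain ⟨i, hi, rfl⟩ := mem_image.mp hp
    rw [SetLike.mem_coe, RingHom.mem_ker, X_pow_eq_monomial, ← monomial_lowerExponent, map_sub,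
      phiMap_monomial, phiMap_monomial, aDegree_single, aDegree_lowerExponent,
      ← hlam i (mem_filter.mp hi).2, sub_self]
  have hspan := restrictScalars_sup_span_monomial_eq_top J
    (InvImage.wf (fun c : Fin (g + 1) →₀ ℕ => ⇑c)
      (Pi.Lex.wellFounded (· > ·) fun _ => wellFounded_lt))
    {c | IsNormalExponent a c} (exists_reduction h0 hbinomial)
  rw [Set.image_eq_range] at hspan
  ext p
  exact SetLike.ext_iff.mp (LinearMap.ker_eq_of_sup_span_eq_top (f := (phiMap g a).toLinearMap)
    hJ hspan (linearIndependent_phiMap_monomial h0)) p
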